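/- (Corollary A.2, positivity of the current) If (j, m) is a stationary solution, then j > 0. -/
import Mathlib


open Real Set Filter Topology MeasureTheory intervalIntegral

/-- The force profile `g(x) = ∫_{x-1}^x 1_{y ≤ ℓ/2} dy − ∫_x^{x+1} 1_{y ≤ ℓ/2} dy`. -/
noncomputable def gfun (ℓ : ℝ) (x : ℝ) : ℝ :=
  (∫ y in (x - 1)..x, if y ≤ ℓ / 2 then (1 : ℝ) else 0) -
  (∫ y in x..(x + 1), if y ≤ ℓ / 2 then (1 : ℝ) else 0)

/-- An IVP solution with parameter `j`: a differentiable `m` on `[0, ℓ]` with `m 0 = 0`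
and `m'(x) = -2j + βλ(1 - m(x)²) g(x)` on `[0, ℓ]`. -/
def IsIVPSolution (β lam ℓ j : ℝ) (m : ℝ → ℝ) : Prop :=
  m 0 = 0 ∧ ∀ x ∈ Icc (0 : ℝ) ℓ,
    HasDerivAt m (-2 * j + β * lam * (1 - m x ^ 2) * gfun ℓ x) x

/-- A stationary solution: an IVP solution which also satisfies `m ℓ = 0`. -/
def IsStationarySolution (β lam ℓ j : ℝ) (m : ℝ → ℝ) : Prop :=
  IsIVPSolution β lam ℓ j m ∧ m ℓ = 0



lemma indic_integrable (a b c : ℝ) :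
    IntervalIntegrable (fun y => if y ≤ c then (1:ℝ) else 0) volume a b := by
  apply (_root_.intervalIntegrable_const (c := (1:ℝ))).mono_fun'
  · exact (Measurable.ite measurableSet_Iic measurable_const measurable_const).aestronglyMeasurable
  · filter_upwards with y
    by_cases h : y ≤ c <;> simp [h]

lemma indic_int_one (a b c : ℝ) (hab : a ≤ b) (hbc : b ≤ c) :
    (∫ y in a..b, if y ≤ c then (1:ℝ) else 0) = b - a := by
  rw [intervalIntegral.integral_congr (g := fun _ => (1:ℝ))]
  · simp
  · intro y hy
    rw [Set.uIcc_of_le hab] at hy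
    simp [hy.2.trans hbc]

lemma indic_int_zero (a b c : ℝ) (hab : a ≤ b) (hca : c ≤ a) :
    (∫ y in a..b, if y ≤ c then (1:ℝ) else 0) = 0 := by
  rw [intervalIntegral.integral_of_le hab]
  rw [MeasureTheory.setIntegral_congr_fun measurableSet_Ioc (g := fun _ => (0:ℝ))]
  · simp
  · intro y hy
    simp [not_le.2 (lt_of_le_of_lt hca hy.1)]

lemma indic_int (a b c : ℝ) (hab : a ≤ b) :
    (∫ y in a..b, if y ≤ c then (1:ℝ) else 0) = min b c - min a c := by
  rcases le_total b c with h | h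
  · rw [indic_int_one a b c hab h, min_eq_left h, min_eq_left (hab.trans h)]
  · rcases le_total c a with h' | h'
    · rw [indic_int_zero a b c hab h', min_eq_right h, min_eq_right h']
      ring
    · rw [← intervalIntegral.integral_add_adjacent_intervals
        (indic_integrable a c c) (indic_integrable c b c),
        indic_int_one a c c h' le_rfl, indic_int_zero c b c h le_rfl,
        min_eq_right h, min_eq_left h']
      ring

lemma gfun_eq (ℓ x : ℝ) :
    gfun ℓ x = 2 * min x (ℓ/2) - min (x-1) (ℓ/2) - min (x+1) (ℓ/2) := by
  rw [gfun, indic_int _ _ _ (by linarith), indic_int _ _ _ (by linarith)]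
  ring

lemma gfun_nonneg (ℓ x : ℝ) : 0 ≤ gfun ℓ x := by
  rw [gfun_eq]
  simp only [min_def]
  split_ifs <;> linarith

lemma gfun_half (ℓ : ℝ) : gfun ℓ (ℓ/2) = 1 := by
  rw [gfun_eq]
  rw [min_self, min_eq_left (by linarith), min_eq_right (by linarith)]
  ring

lemma gfun_cont (ℓ : ℝ) : Continuous (gfun ℓ) := by
  have : gfun ℓ = fun x => 2 * min x (ℓ/2) - min (x-1) (ℓ/2) - min (x+1) (ℓ/2) :=
    funext fun x => gfun_eq ℓ x
  rw [this]
  fun_prop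

lemma pos_right_of_deriv_pos {m : ℝ → ℝ} {x d : ℝ} (h : HasDerivAt m d x) (hd : 0 < d)
    (hmx : m x = 0) : ∀ᶠ y in 𝓝[>] x, 0 < m y := by
  have hs : Tendsto (slope m x) (𝓝[≠] x) (𝓝 d) := hasDerivAt_iff_tendsto_slope.1 h
  have hev : ∀ᶠ y in 𝓝[≠] x, 0 < slope m x y := hs.eventually (eventually_gt_nhds hd)
  have hmono : 𝓝[>] x ≤ 𝓝[≠] x := nhdsWithin_mono x fun y hy => ne_of_gt hy
  filter_upwards [hmono hev, self_mem_nhdsWithin] with y hy hyx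
  have hyx' : (0:ℝ) < y - x := sub_pos.2 hyx
  have := hy
  rw [slope_def_field] at this
  -- slope m x y = (m y - m x)/(y - x)
  rcases div_pos_iff.1 this with ⟨h1, h2⟩ | ⟨h1, h2⟩ <;> nlinarith

lemma neg_left_of_deriv_pos {m : ℝ → ℝ} {x d : ℝ} (h : HasDerivAt m d x) (hd : 0 < d)
    (hmx : m x = 0) : ∀ᶠ y in 𝓝[<] x, m y < 0 := by
  have hs : Tendsto (slope m x) (𝓝[≠] x) (𝓝 d) := hasDerivAt_iff_tendsto_slope.1 h
  have hev : ∀ᶠ y in 𝓝[≠] x, 0 < slope m x y := hs.eventually (eventually_gt_nhds hd)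
  have hmono : 𝓝[<] x ≤ 𝓝[≠] x := nhdsWithin_mono x fun y hy => ne_of_lt hy
  filter_upwards [hmono hev, self_mem_nhdsWithin] with y hy hyx
  have hyx' : y - x < 0 := sub_neg.2 hyx
  rw [slope_def_field] at hy
  have := div_pos_iff.1 hy
  rcases this with ⟨h1, h2⟩ | ⟨h1, h2⟩ <;> nlinarith

lemma eq_zero_of_int_zero {f : ℝ → ℝ} {a b : ℝ} (hab : a < b)
    (hcont : ∀ x ∈ Icc a b, ContinuousAt f x)
    (hnn : ∀ x ∈ Icc a b, 0 ≤ f x)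
    (hint : (∫ x in a..b, f x) = 0) :
    ∀ c ∈ Icc a b, f c = 0 := by
  intro c hc
  by_contra hne
  have hfc : 0 < f c := (hnn c hc).lt_of_ne (Ne.symm hne)
  have hcontOn : ContinuousOn f (Icc a b) := fun x hx => (hcont x hx).continuousWithinAt
  have hev : ∀ᶠ y in 𝓝 c, f c / 2 < f y :=
    (hcont c hc).eventually (eventually_gt_nhds (half_lt_self hfc))
  obtain ⟨ε, hε, hball⟩ := Metric.eventually_nhds_iff.1 hev
  set s := max a (c - ε/2) with hs
  set t := min b (c + ε/2) with ht
  have has : a ≤ s := le_max_left _ _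
  have htb : t ≤ b := min_le_left _ _
  have hst : s < t :=
    max_lt (lt_min hab (by linarith [hc.1])) (lt_min (by linarith [hc.2]) (by linarith))
  have hsub : ∀ p q : ℝ, a ≤ p → p ≤ q → q ≤ b → IntervalIntegrable f volume p q := by
    intro p q h1 h2 h3
    exact (hcontOn.mono (Icc_subset_Icc h1 h3)).intervalIntegrable_of_Icc h2
  have hsplit : (∫ x in a..s, f x) + ((∫ x in s..t, f x) + (∫ x in t..b, f x))
      = ∫ x in a..b, f x := by
    rw [intervalIntegral.integral_add_adjacent_intervals (hsub s t has hst.le htb)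
      (hsub t b (has.trans hst.le) htb le_rfl),
      intervalIntegral.integral_add_adjacent_intervals (hsub a s le_rfl has (hst.le.trans htb))
      (hsub s b has (hst.le.trans htb) le_rfl)]
  have h1 : (0:ℝ) ≤ ∫ x in a..s, f x :=
    intervalIntegral.integral_nonneg has fun u hu =>
      hnn u ⟨hu.1, hu.2.trans (hst.le.trans htb)⟩
  have h2 : (0:ℝ) ≤ ∫ x in t..b, f x :=
    intervalIntegral.integral_nonneg htb fun u hu =>
      hnn u ⟨(has.trans hst.le).trans hu.1, hu.2⟩
  have h3 : f c / 2 * (t - s) ≤ ∫ x in s..t, f x := by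
    have hmono : (∫ x in s..t, (fun _ => f c / 2) x) ≤ ∫ x in s..t, f x := by
      apply intervalIntegral.integral_mono_on hst.le intervalIntegrable_const
        (hsub s t has hst.le htb)
      intro x hx
      refine (hball ?_).le
      rw [Real.dist_eq, abs_lt]
      constructor
      · have := hx.1; have : c - ε/2 ≤ x := le_trans (le_max_right a _) hx.1; linarith
      · have : x ≤ c + ε/2 := hx.2.trans (min_le_right b _); linarith
    rw [intervalIntegral.integral_const, smul_eq_mul] at hmono
    linarith [hmono]
  have hpos : 0 < f c / 2 * (t - s) := by
    have := sub_pos.2 hst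
    positivity
  rw [hint] at hsplit
  linarith


/-- Corollary A.2 (positivity of the current). -/
theorem stationary_current_pos (β lam ℓ : ℝ) (hβ : 0 < β) (hlam : 0 < lam) (hℓ : 2 < ℓ)
    (j : ℝ) (m : ℝ → ℝ) (hm : IsStationarySolution β lam ℓ j m) : 0 < j := by
  obtain ⟨⟨h0, hder⟩, hℓ0⟩ := hm
  rcases lt_trichotomy j 0 with hj | hj | hj
  · exfalso
    have hℓpos : (0:ℝ) < ℓ := by linarith
    have hcontm : ∀ x ∈ Icc (0:ℝ) ℓ, ContinuousAt m x := fun x hx => (hder x hx).continuousAt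
    have pos_right : ∀ x ∈ Icc (0:ℝ) ℓ, m x = 0 → ∀ᶠ y in 𝓝[>] x, 0 < m y := by
      intro x hx hmx
      apply pos_right_of_deriv_pos (hder x hx) _ hmx
      rw [hmx]
      nlinarith [mul_nonneg (mul_nonneg hβ.le hlam.le) (gfun_nonneg ℓ x)]
    have neg_left : ∀ x ∈ Icc (0:ℝ) ℓ, m x = 0 → ∀ᶠ y in 𝓝[<] x, m y < 0 := by
      intro x hx hmx
      apply neg_left_of_deriv_pos (hder x hx) _ hmx
      rw [hmx]
      nlinarith [mul_nonneg (mul_nonneg hβ.le hlam.le) (gfun_nonneg ℓ x)]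
    -- eventually positive just after 0
    obtain ⟨ε, hε0, hIoo⟩ : ∃ ε, 0 < ε ∧ ∀ y ∈ Ioo 0 ε, 0 < m y := by
      have := pos_right 0 ⟨le_rfl, hℓpos.le⟩ h0
      rcases mem_nhdsGT_iff_exists_Ioo_subset.1 this with ⟨u, hu, hsub⟩
      exact ⟨u, hu, fun y hy => hsub hy⟩
    set S := {x | x ∈ Ioc (0:ℝ) ℓ ∧ m x ≤ 0} with hS
    have hℓS : ℓ ∈ S := ⟨⟨hℓpos, le_rfl⟩, le_of_eq hℓ0⟩
    have hSne : S.Nonempty := ⟨ℓ, hℓS⟩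
    have hSlb : ∀ x ∈ S, min ε ℓ ≤ x := by
      intro x hx
      rcases le_or_gt ε x with h | h
      · exact (min_le_left _ _).trans h
      · exact absurd (hIoo x ⟨hx.1.1, h⟩) (not_lt.2 hx.2)
    have hSbdd : BddBelow S := ⟨min ε ℓ, hSlb⟩
    set c := sInf S with hc
    have hcε : min ε ℓ ≤ c := le_csInf hSne hSlb
    have hcpos : 0 < c := lt_of_lt_of_le (lt_min hε0 hℓpos) hcε
    have hcle : c ≤ ℓ := csInf_le hSbdd hℓS
    have hcIcc : c ∈ Icc (0:ℝ) ℓ := ⟨hcpos.le, hcle⟩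
    have hcontc : ContinuousAt m c := hcontm c hcIcc
    -- m c ≤ 0
    have hmc_le : m c ≤ 0 := by
      obtain ⟨u, _, hu_tendsto, hu_mem⟩ := exists_seq_tendsto_sInf hSne hSbdd
      have : Tendsto (m ∘ u) atTop (𝓝 (m c)) := (hcontc.tendsto).comp hu_tendsto
      exact le_of_tendsto this (Eventually.of_forall fun n => (hu_mem n).2)
    -- m positive on (0, c)
    have hposIoo : ∀ y ∈ Ioo (0:ℝ) c, 0 < m y := by
      intro y hy
      by_contra hneg
      have hyS : y ∈ S := ⟨⟨hy.1, hy.2.le.trans hcle⟩, not_lt.1 hneg⟩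
      exact absurd (csInf_le hSbdd hyS) (not_le.2 hy.2)
    -- m c ≥ 0
    have hmc_ge : 0 ≤ m c := by
      have htd : Tendsto m (𝓝[<] c) (𝓝 (m c)) := hcontc.continuousWithinAt.tendsto
      have hev : ∀ᶠ y in 𝓝[<] c, 0 ≤ m y := by
        filter_upwards [Ioo_mem_nhdsLT_of_mem (show c ∈ Ioc (0:ℝ) c from ⟨hcpos, le_rfl⟩)]
          with y hy
        exact (hposIoo y hy).le
      exact ge_of_tendsto htd hev
    have hmc : m c = 0 := le_antisymm hmc_le hmc_ge
    -- contradiction: m negative just left of c, but positive on (0,c)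
    have h1 := neg_left c hcIcc hmc
    have h2 : ∀ᶠ y in 𝓝[<] c, 0 < m y := by
      filter_upwards [Ioo_mem_nhdsLT_of_mem (show c ∈ Ioc (0:ℝ) c from ⟨hcpos, le_rfl⟩)]
        with y hy
      exact hposIoo y hy
    obtain ⟨y, hy1, hy2⟩ := (h1.and h2).exists
    exact absurd hy2 (not_lt.2 hy1.le)
  · exfalso
    subst hj
    have hℓpos : (0:ℝ) < ℓ := by linarith
    set F : ℝ → ℝ := fun x => β * lam * (1 - m x ^ 2) * gfun ℓ x with hF
    have hderF : ∀ x ∈ Icc (0:ℝ) ℓ, HasDerivAt m (F x) x := by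
      intro x hx
      simpa using hder x hx
    have hcontAt : ∀ x ∈ Icc (0:ℝ) ℓ, ContinuousAt m x := fun x hx => (hderF x hx).continuousAt
    have hcontm : ContinuousOn m (Icc 0 ℓ) := fun x hx => (hcontAt x hx).continuousWithinAt
    have hcontF : ContinuousOn F (Icc 0 ℓ) := by
      apply ContinuousOn.mul
      · exact (continuousOn_const.mul ((continuousOn_const.sub (hcontm.pow 2))))
      · exact (gfun_cont ℓ).continuousOn
    have hIF : IntervalIntegrable F volume 0 ℓ := hcontF.intervalIntegrable_of_Icc hℓpos.le
    have huIcc : uIcc (0:ℝ) ℓ = Icc 0 ℓ := uIcc_of_le hℓpos.le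
    have I1 : (∫ x in (0:ℝ)..ℓ, F x) = 0 := by
      rw [intervalIntegral.integral_eq_sub_of_hasDerivAt
        (fun x hx => hderF x (by rwa [huIcc] at hx)) hIF, hℓ0, h0, sub_zero]
    have hcontF2 : ContinuousOn (fun x => 3 * m x ^ 2 * F x) (Icc 0 ℓ) :=
      (continuousOn_const.mul (hcontm.pow 2)).mul hcontF
    have hIF2 : IntervalIntegrable (fun x => 3 * m x ^ 2 * F x) volume 0 ℓ :=
      hcontF2.intervalIntegrable_of_Icc hℓpos.le
    have I2 : (∫ x in (0:ℝ)..ℓ, 3 * m x ^ 2 * F x) = 0 := by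
      have hder3 : ∀ x ∈ uIcc (0:ℝ) ℓ, HasDerivAt (fun y => m y ^ 3) (3 * m x ^ 2 * F x) x := by
        intro x hx
        have h := (hderF x (by rwa [huIcc] at hx)).pow 3
        norm_num at h
        exact h
      rw [intervalIntegral.integral_eq_sub_of_hasDerivAt hder3 hIF2, hℓ0, h0]
      norm_num
    have I3 : (∫ x in (0:ℝ)..ℓ, (1 - m x ^ 2) * F x) = 0 := by
      have heq : (fun x => (1 - m x ^ 2) * F x)
          = fun x => F x - (1/3) * (3 * m x ^ 2 * F x) := by
        funext x; ring
      rw [heq, intervalIntegral.integral_sub hIF (hIF2.const_mul _),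
        intervalIntegral.integral_const_mul, I1, I2]
      ring
    have hzero : ∀ x ∈ Icc (0:ℝ) ℓ, (1 - m x ^ 2) * F x = 0 := by
      apply eq_zero_of_int_zero hℓpos _ _ I3
      · intro x hx
        exact ((continuousAt_const.sub ((hcontAt x hx).pow 2)).mul
          ((continuousAt_const.mul (continuousAt_const.sub ((hcontAt x hx).pow 2))).mul
            ((gfun_cont ℓ).continuousAt)))
      · intro x hx
        have := gfun_nonneg ℓ x
        have h2 : (1 - m x ^ 2) * F x = β * lam * (1 - m x ^ 2)^2 * gfun ℓ x := by
          rw [hF]; ring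
        rw [h2]
        positivity
    have hF0 : ∀ x ∈ Icc (0:ℝ) ℓ, F x = 0 := by
      intro x hx
      have h := hzero x hx
      rcases (gfun_nonneg ℓ x).eq_or_lt with hg | hg
      · simp [hF, ← hg]
      · have h2 : β * lam * (1 - m x ^ 2)^2 * gfun ℓ x = 0 := by rw [← h, hF]; ring
        have h3 : (1 - m x ^ 2) = 0 := by
          by_contra hne
          have hne2 : 0 < (1 - m x ^ 2)^2 := by
            rcases (Ne.symm hne).lt_or_gt with hlt | hlt <;> nlinarith
          have := mul_pos (mul_pos (mul_pos hβ hlam) hne2) hg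
          linarith
        show β * lam * (1 - m x ^ 2) * gfun ℓ x = 0
        rw [h3]
        ring
    have hm0 : ∀ x ∈ Icc (0:ℝ) ℓ, m x = 0 := by
      intro x hx
      have huIcc2 : uIcc (0:ℝ) x = Icc 0 x := uIcc_of_le hx.1
      have hsubI : Icc (0:ℝ) x ⊆ Icc 0 ℓ := Icc_subset_Icc le_rfl hx.2
      have hFTC : (∫ y in (0:ℝ)..x, F y) = m x - m 0 := by
        apply intervalIntegral.integral_eq_sub_of_hasDerivAt
        · intro y hy
          exact hderF y (hsubI (by rwa [huIcc2] at hy))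
        · exact (hcontF.mono hsubI).intervalIntegrable_of_Icc hx.1
      have hzeroInt : (∫ y in (0:ℝ)..x, F y) = 0 := by
        rw [intervalIntegral.integral_congr (g := fun _ => (0:ℝ))]
        · simp
        · intro y hy
          exact hF0 y (hsubI (by rwa [huIcc2] at hy))
      rw [hzeroInt] at hFTC
      rw [h0] at hFTC
      linarith
    have hhalf : (ℓ/2) ∈ Icc (0:ℝ) ℓ := ⟨by linarith, by linarith⟩
    have hc := hF0 _ hhalf
    rw [hF] at hc
    simp only [hm0 _ hhalf, gfun_half] at hc
    norm_num at hc
    rcases hc with h | h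
    · linarith
    · linarith
  · exact hj
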